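/- arXiv:2509.16740 — 2 statements merged into one kernel-verified Lean document; each statement's English description precedes it below -/
import Mathlib

section
/- Let f be a meromorphic function in the unit disc 𝔻, and let ψ₁, ψ₂, ψ₃ be three meromorphic functions in 𝔻, each continuous on ∂𝔻, such that ψᵢ(z) ≠ ψⱼ(z) for all z ∈ ∂𝔻 and all 1 ≤ i < j ≤ 3 (as values in the Riemann sphere ℂ ∪ {∞}). Suppose ψ₁, ψ₂, ψ₃ share f on 𝔻, and set A = {z ∈ 𝔻 : ψ₁(z) = f(z)} = {z ∈ 𝔻 : ψ₂(z) = f(z)} = {z ∈ 𝔻 : ψ₃(z) = f(z)}. Let zₙ ∈ 𝔻 with zₙ → z₀ ∈ ∂𝔻, let ρₙ > 0 with ρₙ → 0, and suppose gₙ(z) = f(zₙ + ρₙ·z) converges uniformly on each compact subset of ℂ (with respect to the spherical metric on the Riemann sphere) to a non-constant meromorphic function g on ℂ. Then for each fixed z ∈ ℂ, the set {n ∈ ℕ : zₙ + ρₙ·z ∈ A} is finite. -/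
open Complex Filter Topology Metric Set
open scoped OnePoint Classical

noncomputable section

/-- The Riemann-sphere-valued version of a meromorphic function: the usual value at
points of analyticity, and `∞` elsewhere (in particular at poles). -/
def sphv (f : ℂ → ℂ) (z : ℂ) : OnePoint ℂ :=
  if AnalyticAt ℂ f z then (f z : OnePoint ℂ) else ∞

/-- Chordal (spherical) distance on `Option ℂ`. -/
def sphDistAux : Option ℂ → Option ℂ → ℝ
  | Option.some a, Option.some b =>
      2 * ‖a - b‖ /
        (Real.sqrt (1 + ‖a‖ ^ 2) * Real.sqrt (1 + ‖b‖ ^ 2))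
  | Option.some a, Option.none => 2 / Real.sqrt (1 + ‖a‖ ^ 2)
  | Option.none, Option.some b => 2 / Real.sqrt (1 + ‖b‖ ^ 2)
  | Option.none, Option.none => 0

/-- Chordal (spherical) distance on the Riemann sphere `OnePoint ℂ`. -/
def sphDist (x y : OnePoint ℂ) : ℝ := sphDistAux x y

/-- The spherical derivative `f^#`: `|f'|/(1+|f|²)` at points of analyticity, and the
limiting value (equal to `(1/f)^#`) at poles. -/
def sphDerivAt (f : ℂ → ℂ) (z : ℂ) : ℝ :=
  if AnalyticAt ℂ f z then ‖deriv f z‖ / (1 + ‖f z‖ ^ 2)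
  else Filter.limsup (fun w => ‖deriv f w‖ / (1 + ‖f w‖ ^ 2)) (𝓝[≠] z)

/-- A genuinely meromorphic function on `s`: meromorphic, and at every point of `s` it is
either analytic or has a pole (tends to `∞`). -/
def MeromorphicNiceOn (f : ℂ → ℂ) (s : Set ℂ) : Prop :=
  MeromorphicOn f s ∧ ∀ z ∈ s, AnalyticAt ℂ f z ∨ Tendsto f (𝓝[≠] z) (cocompact ℂ)

/-- A meromorphic function on the unit disc is a normal function if `(1-|z|²) f^#(z)` is
bounded on the disc. -/
def IsNormalFunction (f : ℂ → ℂ) : Prop :=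
  ∃ C : ℝ, ∀ z ∈ ball (0 : ℂ) 1, (1 - ‖z‖ ^ 2) * sphDerivAt f z ≤ C

/-! If infinitely many of the points `p n = zn n + ρn n * z` lay in `A`, then along those `n`
every `Ψ i (p n)` equals `f (p n)`. As `p n → z₀` and `f (p n) → g z` in the chordal metric,
continuity of `Ψ i` at the boundary point `z₀` forces `Ψ 0 z₀ = g z = Ψ 1 z₀`, contradicting
the separation of the `Ψ i` on the circle. The one analytic input is the continuity of the
chordal distance on the Riemann sphere; near `∞` it follows by writing the distance in terms
of `a⁻¹`. -/

@[simp]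
lemma sphDist_coe_coe (a b : ℂ) :
    sphDist a b = 2 * ‖a - b‖ / (√(1 + ‖a‖ ^ 2) * √(1 + ‖b‖ ^ 2)) := rfl

@[simp]
lemma sphDist_coe_infty (a : ℂ) : sphDist a ∞ = 2 / √(1 + ‖a‖ ^ 2) := rfl

@[simp]
lemma sphDist_infty_coe (b : ℂ) : sphDist ∞ b = 2 / √(1 + ‖b‖ ^ 2) := rfl

@[simp]
lemma sphDist_infty_infty : sphDist ∞ ∞ = 0 := rfl

lemma sphDist_nonneg (x y : OnePoint ℂ) : 0 ≤ sphDist x y := by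
  induction x using OnePoint.rec <;> induction y using OnePoint.rec <;>
    simp only [sphDist_infty_infty, sphDist_infty_coe, sphDist_coe_infty, sphDist_coe_coe] <;>
    positivity

lemma eq_of_sphDist_eq_zero {x y : OnePoint ℂ} (h : sphDist x y = 0) : x = y := by
  induction x using OnePoint.rec <;> induction y using OnePoint.rec
  · rfl
  · exact absurd h (by rw [sphDist_infty_coe]; positivity)
  · exact absurd h (by rw [sphDist_coe_infty]; positivity)
  · rename_i a b
    have hden : 0 < √(1 + ‖a‖ ^ 2) * √(1 + ‖b‖ ^ 2) := by positivity
    rw [sphDist_coe_coe, div_eq_zero_iff, or_iff_left hden.ne', mul_eq_zero,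
      or_iff_right two_ne_zero, norm_eq_zero, sub_eq_zero] at h
    rw [h]

lemma sqrt_one_add_norm_sq_eq_norm_mul {a : ℂ} (ha : a ≠ 0) :
    √(1 + ‖a‖ ^ 2) = ‖a‖ * √(‖a⁻¹‖ ^ 2 + 1) := by
  rw [← Real.sqrt_sq (norm_nonneg a), ← Real.sqrt_mul (sq_nonneg _), Real.sqrt_sq (norm_nonneg a),
    norm_inv]
  congr 1
  field_simp

lemma sphDist_coe_infty_eq_inv {a : ℂ} (ha : a ≠ 0) :
    sphDist a ∞ = 2 * ‖a⁻¹‖ / √(‖a⁻¹‖ ^ 2 + 1) := by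
  rw [sphDist_coe_infty, sqrt_one_add_norm_sq_eq_norm_mul ha, norm_inv]
  have : 0 < ‖a‖ := norm_pos_iff.2 ha
  field_simp

lemma sphDist_coe_coe_eq_inv {a : ℂ} (ha : a ≠ 0) (c : ℂ) :
    sphDist a c = 2 * ‖1 - c * a⁻¹‖ / (√(‖a⁻¹‖ ^ 2 + 1) * √(1 + ‖c‖ ^ 2)) := by
  have hsub : a - c = a * (1 - c * a⁻¹) := by field_simp
  rw [sphDist_coe_coe, sqrt_one_add_norm_sq_eq_norm_mul ha, hsub, norm_mul]
  have : 0 < ‖a‖ := norm_pos_iff.2 ha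
  field_simp

open Bornology in
lemma tendsto_sphDist_cobounded (x : OnePoint ℂ) :
    Tendsto (fun a : ℂ => sphDist a x) (cobounded ℂ) (𝓝 (sphDist ∞ x)) := by
  have hne : ∀ᶠ a : ℂ in cobounded ℂ, a ≠ 0 := eventually_ne_cobounded 0
  induction x using OnePoint.rec with
  | infty =>
    have hF : Continuous fun w : ℂ => 2 * ‖w‖ / √(‖w‖ ^ 2 + 1) := by
      fun_prop (disch := intro; positivity)
    refine (((hF.tendsto 0).comp tendsto_inv₀_cobounded).congr' ?_).trans_eq (by simp)
    filter_upwards [hne] with a ha using (sphDist_coe_infty_eq_inv ha).symm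
  | coe c =>
    have hF : Continuous fun w : ℂ =>
        2 * ‖1 - c * w‖ / (√(‖w‖ ^ 2 + 1) * √(1 + ‖c‖ ^ 2)) := by
      fun_prop (disch := intro; positivity)
    refine (((hF.tendsto 0).comp tendsto_inv₀_cobounded).congr' ?_).trans_eq (by simp)
    filter_upwards [hne] with a ha using (sphDist_coe_coe_eq_inv ha c).symm

lemma continuous_sphDist_left (x : OnePoint ℂ) : Continuous fun y : OnePoint ℂ => sphDist y x := by
  refine (OnePoint.continuous_iff _).2 ⟨?_, ?_⟩
  · rw [coclosedCompact_eq_cocompact, ← Metric.cobounded_eq_cocompact]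
    exact tendsto_sphDist_cobounded x
  · induction x using OnePoint.rec with
    | infty => simp only [sphDist_coe_infty]; fun_prop (disch := intro; positivity)
    | coe c => simp only [sphDist_coe_coe]; fun_prop (disch := intro; positivity)

lemma eq_of_tendsto_of_tendsto_sphDist {α : Type*} {l : Filter α} [l.NeBot]
    {u : α → OnePoint ℂ} {x y : OnePoint ℂ} (hu : Tendsto u l (𝓝 x))
    (hd : Tendsto (fun a => sphDist (u a) y) l (𝓝 0)) : x = y :=
  eq_of_sphDist_eq_zero <| tendsto_nhds_unique (((continuous_sphDist_left y).tendsto x).comp hu) hd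

theorem finitely_many_terms_in_sharing_set_general
    (f : ℂ → ℂ) (ψ : Fin 3 → ℂ → ℂ) (Ψ : Fin 3 → ℂ → OnePoint ℂ) (A : Set ℂ)
    (hΨc : ∀ i, ContinuousOn (Ψ i) (closedBall (0 : ℂ) 1))
    (hΨeq : ∀ i, ∀ z ∈ ball (0 : ℂ) 1, Ψ i z = sphv (ψ i) z)
    (hsep : ∀ z ∈ sphere (0 : ℂ) 1, ∀ i j : Fin 3, i ≠ j → Ψ i z ≠ Ψ j z)
    (hA : ∀ i : Fin 3, A = {z | z ∈ ball (0 : ℂ) 1 ∧ sphv (ψ i) z = sphv f z})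
    (zn : ℕ → ℂ) (z₀ : ℂ)
    (hz₀ : z₀ ∈ sphere (0 : ℂ) 1)
    (hlim : Tendsto zn atTop (𝓝 z₀))
    (ρn : ℕ → ℝ) (hρ0 : Tendsto ρn atTop (𝓝 0))
    (g : ℂ → ℂ)
    (hconv : ∀ K : Set ℂ, IsCompact K → ∀ ε > 0, ∀ᶠ n in atTop, ∀ z ∈ K,
      zn n + (ρn n : ℂ) * z ∈ ball (0 : ℂ) 1 ∧
      sphDist (sphv f (zn n + (ρn n : ℂ) * z)) (sphv g z) < ε) :
    ∀ z : ℂ, {n : ℕ | zn n + (ρn n : ℂ) * z ∈ A}.Finite := by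
  intro z
  set p : ℕ → ℂ := fun n => zn n + (ρn n : ℂ) * z
  have hconv_z (ε : ℝ) (hε : 0 < ε) :
      ∀ᶠ n in atTop, p n ∈ ball (0 : ℂ) 1 ∧ sphDist (sphv f (p n)) (sphv g z) < ε :=
    (hconv {z} isCompact_singleton ε hε).mono fun n hn => hn z rfl
  have hp : Tendsto p atTop (𝓝[closedBall 0 1] z₀) := by
    refine tendsto_nhdsWithin_iff.2 ⟨?_, (hconv_z 1 one_pos).mono fun n hn =>
      ball_subset_closedBall hn.1⟩
    simpa using hlim.add ((continuous_ofReal.tendsto' 0 0 ofReal_zero).comp hρ0 |>.mul_const z)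
  have hfg : Tendsto (fun n => sphDist (sphv f (p n)) (sphv g z)) atTop (𝓝 0) :=
    tendsto_order.2 ⟨fun a ha => .of_forall fun n => ha.trans_le (sphDist_nonneg _ _),
      fun ε hε => (hconv_z ε hε).mono fun n hn => hn.2⟩
  by_contra hinf
  let l := atTop ⊓ 𝓟 {n | p n ∈ A}
  have : l.NeBot := by
    rw [← frequently_mem_iff_neBot, ← Nat.cofinite_eq_atTop]
    exact Set.Infinite.frequently_cofinite hinf
  have hΨ_eq (i : Fin 3) : Ψ i z₀ = sphv g z := by
    refine eq_of_tendsto_of_tendsto_sphDist (l := l)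
      ((hΨc i z₀ (sphere_subset_closedBall hz₀)).tendsto.comp (hp.mono_left inf_le_left))
      ((hfg.mono_left inf_le_left).congr' ?_)
    filter_upwards [inf_le_right (a := atTop) (mem_principal_self {n | p n ∈ A})] with n hn
    rw [hA i] at hn
    obtain ⟨hn_ball, hn_eq⟩ := hn
    simp only [Function.comp_apply, hΨeq i _ hn_ball, hn_eq]
  exact hsep z₀ hz₀ 0 1 (by decide) ((hΨ_eq 0).trans (hΨ_eq 1).symm)

/-- **Claim in the proof of the main theorem.** If `ψ 0, ψ 1, ψ 2` share `f` on the disc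
with common sharing set `A`, are continuous on the boundary and mutually distinct there,
`zₙ → z₀ ∈ ∂𝔻`, `ρₙ → 0`, and `f(zₙ + ρₙ z)` converges uniformly on compacta (spherical
metric) to a non-constant meromorphic `g` on `ℂ`, then for each fixed `z` only finitely
many terms `zₙ + ρₙ z` lie in `A`. -/
theorem finitely_many_terms_in_sharing_set
    (f : ℂ → ℂ) (ψ : Fin 3 → ℂ → ℂ) (Ψ : Fin 3 → ℂ → OnePoint ℂ) (A : Set ℂ)
    (hf : MeromorphicNiceOn f (ball (0 : ℂ) 1))
    (hψ : ∀ i, MeromorphicNiceOn (ψ i) (ball (0 : ℂ) 1))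
    (hΨc : ∀ i, ContinuousOn (Ψ i) (closedBall (0 : ℂ) 1))
    (hΨeq : ∀ i, ∀ z ∈ ball (0 : ℂ) 1, Ψ i z = sphv (ψ i) z)
    (hsep : ∀ z ∈ sphere (0 : ℂ) 1, ∀ i j : Fin 3, i ≠ j → Ψ i z ≠ Ψ j z)
    (hA : ∀ i : Fin 3, A = {z | z ∈ ball (0 : ℂ) 1 ∧ sphv (ψ i) z = sphv f z})
    (zn : ℕ → ℂ) (z₀ : ℂ)
    (hzn : ∀ n, zn n ∈ ball (0 : ℂ) 1)
    (hz₀ : z₀ ∈ sphere (0 : ℂ) 1)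
    (hlim : Tendsto zn atTop (𝓝 z₀))
    (ρn : ℕ → ℝ) (hρ : ∀ n, 0 < ρn n) (hρ0 : Tendsto ρn atTop (𝓝 0))
    (g : ℂ → ℂ) (hg : MeromorphicNiceOn g Set.univ)
    (hgnc : ¬ ∀ z w : ℂ, sphv g z = sphv g w)
    (hconv : ∀ K : Set ℂ, IsCompact K → ∀ ε > 0, ∀ᶠ n in atTop, ∀ z ∈ K,
      zn n + (ρn n : ℂ) * z ∈ ball (0 : ℂ) 1 ∧
      sphDist (sphv f (zn n + (ρn n : ℂ) * z)) (sphv g z) < ε) :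
    ∀ z : ℂ, {n : ℕ | zn n + (ρn n : ℂ) * z ∈ A}.Finite :=
  finitely_many_terms_in_sharing_set_general f ψ Ψ A hΨc hΨeq hsep hA zn z₀ hz₀ hlim ρn hρ0 g hconv

end
end

section
/- Let f(z) = tan(1/(1 − z)) on the unit disc 𝔻. Then: (i) f(z) ≠ i and f(z) ≠ −i for every z ∈ 𝔻 at which f is analytic (so the sets {z ∈ 𝔻 : f(z) = i} and {z ∈ 𝔻 : f(z) = −i} are both empty); and (ii) the set {z ∈ 𝔻 : f(z) = 1} equals {1 − 4/((4k + 1)π) : k ∈ ℕ ∪ {0}}. -/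
open Complex Filter Topology Metric Set
open scoped OnePoint Classical

noncomputable section

/-!
Writing `tan = sin / cos`, the equation `tan w = c` with `c ^ 2 = -1` would give
`sin² w + cos² w = 0`, so `tan` omits `±i`. The equation `tan w = 1` means `sin (w - π/4) = 0`,
i.e. `w = π/4 + kπ` with `k ∈ ℤ`; hence `tan (1/(1-z)) = 1` exactly at the real points
`z = 1 - 1/(π/4 + kπ)`, which lie in the unit disc iff `π/4 + kπ > 1/2`, i.e. iff `k ≥ 0`.
At these points `cos (1/(1-z)) ≠ 0`, so `f` is analytic there and its spherical value is `1`.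
-/

open Real

namespace Complex

theorem cos_ne_zero_of_tan_ne_zero {w : ℂ} (h : tan w ≠ 0) : cos w ≠ 0 := by
  intro hcos
  rw [tan_eq_sin_div_cos, hcos, div_zero] at h
  exact h rfl

theorem tan_ne_of_sq_eq_neg_one {c : ℂ} (hc : c ^ 2 = -1) (w : ℂ) : tan w ≠ c := by
  intro htan
  have hc0 : c ≠ 0 := by rintro rfl; norm_num at hc
  have hcos : cos w ≠ 0 := cos_ne_zero_of_tan_ne_zero (htan ▸ hc0)
  have hsin : sin w = c * cos w := by
    rw [← htan, tan_eq_sin_div_cos, div_mul_cancel₀ _ hcos]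
  have hpyth := sin_sq_add_cos_sq w
  rw [hsin] at hpyth
  exact zero_ne_one (by linear_combination hpyth - cos w ^ 2 * hc : (0 : ℂ) = 1)

theorem tan_ne_I (w : ℂ) : tan w ≠ I := tan_ne_of_sq_eq_neg_one I_sq w

theorem tan_ne_neg_I (w : ℂ) : tan w ≠ -I := tan_ne_of_sq_eq_neg_one (by rw [neg_sq, I_sq]) w

theorem tan_eq_one_iff {w : ℂ} : tan w = 1 ↔ ∃ k : ℤ, w = π / 4 + k * π := by
  have hcos : cos (π / 4) = sin (π / 4) := by
    exact_mod_cast Real.cos_pi_div_four.trans Real.sin_pi_div_four.symm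
  constructor
  · intro htan
    have hcos_w : cos w ≠ 0 := cos_ne_zero_of_tan_ne_zero (htan ▸ one_ne_zero)
    have hsin_w : sin w = cos w := by rwa [tan_eq_sin_div_cos, div_eq_one_iff_eq hcos_w] at htan
    have hsin_sub : sin (w - π / 4) = 0 := by rw [sin_sub, hcos, hsin_w]; ring
    obtain ⟨k, hk⟩ := sin_eq_zero_iff.mp hsin_sub
    exact ⟨k, by linear_combination hk⟩
  · rintro ⟨k, rfl⟩
    rw [tan_add_int_mul_pi]
    exact_mod_cast Real.tan_pi_div_four

theorem _root_.AnalyticAt.ctan {E : Type*} [NormedAddCommGroup E] [NormedSpace ℂ E]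
    {f : E → ℂ} {x : E} (hf : AnalyticAt ℂ f x) (hcos : cos (f x) ≠ 0) :
    AnalyticAt ℂ (fun y => tan (f y)) x := by
  simp only [tan_eq_sin_div_cos]
  exact (analyticAt_sin.comp hf).div (analyticAt_cos.comp hf) hcos

end Complex

theorem sphv_eq_coe_iff {f : ℂ → ℂ} {z a : ℂ} :
    sphv f z = a ↔ AnalyticAt ℂ f z ∧ f z = a := by
  unfold sphv
  split_ifs with hf <;> simp [hf]

theorem ofReal_one_sub_inv_mem_ball_iff {a : ℝ} :
    ((1 - a⁻¹ : ℝ) : ℂ) ∈ ball (0 : ℂ) 1 ↔ 1 / 2 < a := by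
  rw [mem_ball_zero_iff, norm_real, Real.norm_eq_abs, abs_lt]
  constructor
  · rintro ⟨hlow, hup⟩
    have ha : 0 < a := inv_pos.mp (by linarith)
    rw [div_lt_iff₀ two_pos]
    have := (inv_lt_iff_one_lt_mul₀ ha).mp (by linarith : a⁻¹ < 2)
    linarith
  · intro ha
    have ha0 : 0 < a := by linarith
    have : a⁻¹ < 2 := (inv_lt_iff_one_lt_mul₀ ha0).mpr (by linarith)
    constructor <;> linarith [inv_pos.mpr ha0]

theorem half_lt_pi_div_four_add_int_mul_pi_iff {k : ℤ} : 1 / 2 < π / 4 + k * π ↔ 0 ≤ k := by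
  have hpi := Real.pi_gt_three
  constructor
  · intro h
    by_contra! hk
    have : (k : ℝ) ≤ -1 := by exact_mod_cast Int.le_sub_one_of_lt hk
    nlinarith
  · intro hk
    have : (0 : ℝ) ≤ k := by exact_mod_cast hk
    nlinarith

theorem mem_ball_and_tan_one_div_one_sub_eq_one_iff {z : ℂ} :
    z ∈ ball (0 : ℂ) 1 ∧ tan (1 / (1 - z)) = 1 ↔
      ∃ k : ℕ, z = ((1 - 4 / ((4 * (k : ℝ) + 1) * π) : ℝ) : ℂ) := by
  have hsolve (k : ℤ) :
      1 / (1 - z) = π / 4 + k * π ↔ z = ((1 - (π / 4 + k * π)⁻¹ : ℝ) : ℂ) := by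
    rw [one_div, inv_eq_iff_eq_inv]
    push_cast
    constructor <;> intro h <;> linear_combination -h
  calc z ∈ ball (0 : ℂ) 1 ∧ tan (1 / (1 - z)) = 1
      ↔ ∃ k : ℤ, 0 ≤ k ∧ z = ((1 - (π / 4 + k * π)⁻¹ : ℝ) : ℂ) := by
        simp only [tan_eq_one_iff, hsolve]
        constructor
        · rintro ⟨hz, k, rfl⟩
          exact ⟨k, half_lt_pi_div_four_add_int_mul_pi_iff.mp
            (ofReal_one_sub_inv_mem_ball_iff.mp hz), rfl⟩
        · rintro ⟨k, hk, rfl⟩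
          exact ⟨ofReal_one_sub_inv_mem_ball_iff.mpr
            (half_lt_pi_div_four_add_int_mul_pi_iff.mpr hk), k, rfl⟩
    _ ↔ ∃ k : ℕ, z = ((1 - 4 / ((4 * (k : ℝ) + 1) * π) : ℝ) : ℂ) := by
        have hinv (k : ℕ) : (π / 4 + (k : ℤ) * π)⁻¹ = 4 / ((4 * (k : ℝ) + 1) * π) := by
          push_cast
          field_simp
          ring
        constructor
        · rintro ⟨k, hk, rfl⟩
          lift k to ℕ using hk
          exact ⟨k, by rw [hinv]⟩
        · rintro ⟨k, rfl⟩
          exact ⟨k, k.cast_nonneg, by rw [hinv]⟩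

theorem analyticAt_tan_one_div_one_sub {z : ℂ} (hz : z ≠ 1) (hcos : cos (1 / (1 - z)) ≠ 0) :
    AnalyticAt ℂ (fun z : ℂ => tan (1 / (1 - z))) z :=
  (analyticAt_const.div (analyticAt_const.sub analyticAt_id) (sub_ne_zero.mpr hz.symm)).ctan hcos

/-- **Example (sharpness of three).** For `f(z) = tan(1/(1-z))` on the unit disc:
(i) `f` omits the values `i` and `-i` (so the sets `{z ∈ 𝔻 : f(z) = i}` and
`{z ∈ 𝔻 : f(z) = -i}` are empty), and
(ii) `{z ∈ 𝔻 : f(z) = 1} = {1 - 4/((4k+1)π) : k ∈ ℕ}`. -/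
theorem tan_one_div_one_sub_value_sets :
    (∀ z ∈ ball (0 : ℂ) 1,
        AnalyticAt ℂ (fun z : ℂ => Complex.tan (1 / (1 - z))) z →
        Complex.tan (1 / (1 - z)) ≠ Complex.I ∧
        Complex.tan (1 / (1 - z)) ≠ -Complex.I) ∧
    {z | z ∈ ball (0 : ℂ) 1 ∧
        sphv (fun z : ℂ => Complex.tan (1 / (1 - z))) z = (Complex.I : OnePoint ℂ)} = ∅ ∧
    {z | z ∈ ball (0 : ℂ) 1 ∧
        sphv (fun z : ℂ => Complex.tan (1 / (1 - z))) z = ((-Complex.I : ℂ) : OnePoint ℂ)} = ∅ ∧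
    {z | z ∈ ball (0 : ℂ) 1 ∧
        sphv (fun z : ℂ => Complex.tan (1 / (1 - z))) z = ((1 : ℂ) : OnePoint ℂ)} =
      {z : ℂ | ∃ k : ℕ, z = ((1 - 4 / ((4 * (k : ℝ) + 1) * Real.pi) : ℝ) : ℂ)} := by
  refine ⟨fun z _ _ => ⟨tan_ne_I _, tan_ne_neg_I _⟩, ?_, ?_, ?_⟩
  · simp [sphv_eq_coe_iff, tan_ne_I]
  · simp [sphv_eq_coe_iff, tan_ne_neg_I]
  ext z
  simp only [mem_ofPred_eq, sphv_eq_coe_iff, ← mem_ball_and_tan_one_div_one_sub_eq_one_iff]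
  refine and_congr_right fun hz => and_iff_right_of_imp fun htan => ?_
  have hz1 : z ≠ 1 := by rintro rfl; simp at hz
  have hcos : cos (1 / (1 - z)) ≠ 0 :=
    cos_ne_zero_of_tan_ne_zero (by rw [htan]; exact one_ne_zero)
  exact analyticAt_tan_one_div_one_sub hz1 hcos

end
end
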